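/- arXiv:2605.26439 — 5 statements merged into one kernel-verified Lean document; each statement's English description precedes it below -/
import Mathlib

section
/- Let N ∈ ℕ, let μ > 0 and let λ_1, …, λ_N be positive real numbers, all distinct from μ and pairwise distinct. Then the distance in L²(0,∞) from the function t ↦ e^{−μ t} to the linear span of the functions {t ↦ e^{−λ_k t} : 1 ≤ k ≤ N} equals (2μ)^{−1/2} ∏_{k=1}^N |λ_k − μ|/(λ_k + μ). -/
/-!
For coefficients `d`, the function `x ↦ ⟪e^{-μ·} - ∑ d_k e^{-λ_k·}, e^{-x·}⟫ = 1/(x+μ) - ∑ d_k/(x+λ_k)`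
is a rational function. By Lagrange interpolation `d` can be chosen so that it equals
`A ∏ (x-λ_k) / ((x+μ) ∏ (x+λ_k))` with `A = ∏ (μ-λ_k)/(μ+λ_k)`. It then vanishes at every `λ_j`,
so `e^{-μ·} - ∑ d_k e^{-λ_k·}` is orthogonal to the span, and the squared distance is the value at
`x = μ`, namely `A²/(2μ)`.
-/

open MeasureTheory Real Set Metric

open Finset Polynomial in
theorem Lagrange.eval_eq_eval_nodal_mul_sum {F ι : Type*} [Field F] [DecidableEq ι]
    {s : Finset ι} {v : ι → F} (hvs : Set.InjOn v s) {p : F[X]} (hp : p.degree < #s) {x : F}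
    (hx : ∀ i ∈ s, x ≠ v i) :
    p.eval x = (nodal s v).eval x * ∑ i ∈ s, nodalWeight s v i * (x - v i)⁻¹ * p.eval (v i) := by
  conv_lhs => rw [eq_interpolate hvs hp]
  exact eval_interpolate_not_at_node _ hx

open Finset Polynomial Lagrange Function in
theorem exists_inv_add_sub_sum_eq_prod {N : ℕ} {μ : ℝ} {lam : Fin N → ℝ} (hinj : Injective lam)
    (hne : ∀ k, lam k ≠ μ) (hsum : ∀ k, μ + lam k ≠ 0) :
    ∃ d : Fin N → ℝ, ∀ x, x + μ ≠ 0 → (∀ k, x + lam k ≠ 0) →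
      (x + μ)⁻¹ - ∑ k, d k * (x + lam k)⁻¹ =
        (∏ k, (μ - lam k) / (μ + lam k)) * (∏ k, (x - lam k)) /
          ((x + μ) * ∏ k, (x + lam k)) := by
  classical
  set A := ∏ k, (μ - lam k) / (μ + lam k)
  set v : Fin (N + 1) → ℝ := Fin.cons (-μ) (-lam)
  have hv : Injective v :=
    Fin.cons_injective_iff.2 ⟨fun ⟨k, hk⟩ => hne k (neg_inj.1 hk), neg_injective.comp hinj⟩
  set p : ℝ[X] := C A * nodal univ lam
  have hp_eval : ∀ x, p.eval x = A * ∏ k, (x - lam k) := by simp [p, eval_nodal]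
  have hp_deg : p.degree < #(univ : Finset (Fin (N + 1))) := by
    calc p.degree ≤ (C A).degree + (nodal univ lam).degree := degree_mul_le _ _
      _ ≤ 0 + N := add_le_add degree_C_le (by simp [degree_nodal])
      _ < #(univ : Finset (Fin (N + 1))) := by
        rw [zero_add, card_univ, Fintype.card_fin]; exact_mod_cast N.lt_succ_self
  -- the residue of the right-hand side at `-μ` is `1`; this is what fixes `A`
  have hres : nodalWeight univ v 0 * p.eval (v 0) = 1 := by
    rw [nodalWeight, Fin.univ_succ, erase_cons, prod_map, hp_eval, mul_left_comm,
      ← prod_mul_distrib, ← prod_mul_distrib]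
    refine prod_eq_one fun k _ => ?_
    have hsub_k : μ - lam k ≠ 0 := sub_ne_zero.2 (hne k).symm
    have hsum_k := hsum k
    simp only [v, Fin.cons_zero, Function.Embedding.coeFn_mk, Fin.cons_succ, Pi.neg_apply]
    rw [show -μ - -lam k = -(μ - lam k) by ring, show -μ - lam k = -(μ + lam k) by ring]
    field_simp
  refine ⟨fun k => -(nodalWeight univ v k.succ * p.eval (v k.succ)), fun x hxμ hxlam => ?_⟩
  have hx : ∀ i ∈ (univ : Finset (Fin (N + 1))), x ≠ v i := by
    intro i _
    refine Fin.cases ?_ (fun k => ?_) i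
    · simpa [v, eq_neg_iff_add_eq_zero] using hxμ
    · simpa [v, eq_neg_iff_add_eq_zero] using hxlam k
  have hnodal : (nodal univ v).eval x = (x + μ) * ∏ k, (x + lam k) := by
    simp [eval_nodal, Fin.prod_univ_succ, v]
  rw [← hp_eval, eval_eq_eval_nodal_mul_sum hv.injOn hp_deg hx, hnodal,
    mul_div_cancel_left₀ _ (mul_ne_zero hxμ (prod_ne_zero_iff.2 fun k _ => hxlam k)),
    Fin.sum_univ_succ, mul_right_comm, hres]
  simp only [v, Fin.cons_zero, Fin.cons_succ, Pi.neg_apply, sub_neg_eq_add, one_mul, neg_mul,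
    sum_neg_distrib, sub_neg_eq_add, add_right_inj]
  exact sum_congr rfl fun k _ => mul_right_comm _ _ _

section InnerProductSpace

variable {E : Type*} [NormedAddCommGroup E] [InnerProductSpace ℝ E]

theorem infDist_eq_norm_sub_of_forall_inner_eq_zero {K : Submodule ℝ E} {g w : E} (hw : w ∈ K)
    (horth : ∀ u ∈ K, inner ℝ (g - w) u = 0) : infDist g K = ‖g - w‖ := by
  have : Nonempty (K : Set E) := ⟨⟨0, K.zero_mem⟩⟩
  rw [infDist_eq_iInf]
  simp only [dist_eq_norm]
  exact ((K.norm_eq_iInf_iff_real_inner_eq_zero hw).2 horth).symm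

open Finset Function in
theorem infDist_span_eq_of_inner_eq_inv_add {N : ℕ} {μ : ℝ} (hμ : 0 < μ) {lam : Fin N → ℝ}
    (hpos : ∀ k, 0 < lam k) (hne : ∀ k, lam k ≠ μ) (hinj : Injective lam) {g : E} {f : Fin N → E}
    (hgg : inner ℝ g g = (μ + μ)⁻¹) (hfg : ∀ k, inner ℝ (f k) g = (lam k + μ)⁻¹)
    (hff : ∀ j k, inner ℝ (f k) (f j) = (lam k + lam j)⁻¹) :
    infDist g (Submodule.span ℝ (range f) : Set E) =
      (√(2 * μ))⁻¹ * ∏ k, |lam k - μ| / (lam k + μ) := by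
  obtain ⟨d, hd⟩ :=
    exists_inv_add_sub_sum_eq_prod hinj hne fun k => (add_pos hμ (hpos k)).ne'
  set A := ∏ k, (μ - lam k) / (μ + lam k)
  set w := ∑ k, d k • f k
  have hw : w ∈ Submodule.span ℝ (range f) :=
    Submodule.sum_mem _ fun k _ => Submodule.smul_mem _ _ (Submodule.subset_span ⟨k, rfl⟩)
  have inner_sub_w : ∀ h, inner ℝ (g - w) h = inner ℝ g h - ∑ k, d k * inner ℝ (f k) h := by
    simp [w, inner_sub_left, sum_inner, real_inner_smul_left]
  have horth_f : ∀ j, inner ℝ (g - w) (f j) = 0 := by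
    intro j
    have hpos_j : ∀ k, lam j + lam k ≠ 0 := fun k => (add_pos (hpos j) (hpos k)).ne'
    rw [inner_sub_w, real_inner_comm, hfg]
    simp_rw [hff, fun k => add_comm (lam k) (lam j)]
    rw [hd (lam j) (add_pos (hpos j) hμ).ne' hpos_j, prod_eq_zero (mem_univ j) (sub_self _),
      mul_zero, zero_div]
  have horth : ∀ u ∈ Submodule.span ℝ (range f), inner ℝ (g - w) u = 0 := by
    have : Submodule.span ℝ (range f) ≤ LinearMap.ker (innerₛₗ ℝ (g - w)) :=
      Submodule.span_le.2 (range_subset_iff.2 horth_f)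
    exact fun u hu => this hu
  have hnorm_sq : ‖g - w‖ ^ 2 = A ^ 2 / (2 * μ) := by
    rw [← real_inner_self_eq_norm_sq, inner_sub_right, horth w hw, sub_zero, inner_sub_w, hgg]
    simp_rw [hfg, add_comm _ μ]
    rw [hd μ (add_pos hμ hμ).ne' fun k => (add_pos hμ (hpos k)).ne', mul_div_mul_comm,
      ← prod_div_distrib]
    ring
  have hA : |A| = ∏ k, |lam k - μ| / (lam k + μ) := by
    simp_rw [A, abs_prod, abs_div, abs_sub_comm μ, abs_of_pos (add_pos hμ (hpos _)), add_comm μ]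
  rw [infDist_eq_norm_sub_of_forall_inner_eq_zero hw horth, ← sqrt_sq (norm_nonneg _), hnorm_sq,
    sqrt_div' _ (by positivity), sqrt_sq_eq_abs, hA, div_eq_inv_mul]

end InnerProductSpace

theorem inner_eq_inv_add_of_ae_eq_exp {a b : ℝ} (ha : 0 < a) (hb : 0 < b)
    {f g : Lp ℝ 2 (volume.restrict (Ioi (0 : ℝ)))}
    (hf : f =ᵐ[volume.restrict (Ioi 0)] fun t => exp (-a * t))
    (hg : g =ᵐ[volume.restrict (Ioi 0)] fun t => exp (-b * t)) :
    inner ℝ f g = (a + b)⁻¹ := by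
  have hfg : ∀ᵐ t ∂(volume.restrict (Ioi 0)), inner ℝ (f t) (g t) = exp (-(a + b) * t) := by
    filter_upwards [hf, hg] with t hft hgt
    rw [hft, hgt, RCLike.inner_apply, conj_trivial, ← exp_add]
    ring_nf
  rw [L2.inner_def, integral_congr_ae hfg, integral_exp_mul_Ioi (by linarith) 0, mul_zero,
    exp_zero, neg_div_neg_eq, one_div]

/-- Gram/Cauchy determinant formula: the distance in `L²(0,∞)` from
`e^{-μt}` to the span of finitely many exponentials `e^{-λ_k t}` equals
`(2μ)^{-1/2} ∏_k |λ_k - μ|/(λ_k + μ)`. -/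
theorem stmt4 (N : ℕ) (μ : ℝ) (hμ : 0 < μ) (lam : Fin N → ℝ)
    (hpos : ∀ k, 0 < lam k) (hne : ∀ k, lam k ≠ μ)
    (hinj : Function.Injective lam)
    (G : Lp ℝ 2 (volume.restrict (Ioi (0 : ℝ))))
    (hG : (G : ℝ → ℝ) =ᵐ[volume.restrict (Ioi (0 : ℝ))]
      fun t => Real.exp (-μ * t))
    (F : Fin N → Lp ℝ 2 (volume.restrict (Ioi (0 : ℝ))))
    (hF : ∀ k, (F k : ℝ → ℝ) =ᵐ[volume.restrict (Ioi (0 : ℝ))]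
      fun t => Real.exp (-lam k * t)) :
    infDist G
        ((Submodule.span ℝ (Set.range F) :
          Submodule ℝ (Lp ℝ 2 (volume.restrict (Ioi (0 : ℝ))))) :
          Set (Lp ℝ 2 (volume.restrict (Ioi (0 : ℝ)))))
      = (Real.sqrt (2 * μ))⁻¹ * ∏ k, |lam k - μ| / (lam k + μ) :=
  infDist_span_eq_of_inner_eq_inv_add hμ hpos hne hinj
    (inner_eq_inv_add_of_ae_eq_exp hμ hμ hG hG)
    (fun k => inner_eq_inv_add_of_ae_eq_exp (hpos k) hμ (hF k) hG)
    (fun j k => inner_eq_inv_add_of_ae_eq_exp (hpos k) (hpos j) (hF k) (hF j))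
end

section
/- Let (λ_k)_{k≥1} be a sequence of pairwise distinct positive real numbers with ∑_{k≥1} 1/λ_k < ∞. Then for every n ∈ ℕ⁺, the infinite product ∏_{k≠n} |λ_k − λ_n|/(λ_k + λ_n) converges to a positive number, and the distance in L²(0,∞) from the function t ↦ e^{−λ_n t} to the closure of the linear span of {t ↦ e^{−λ_k t} : k ≠ n} equals (2λ_n)^{−1/2} ∏_{k≠n} |λ_k − λ_n|/(λ_k + λ_n). -/
/-!
Write `e_x` for `t ↦ e^{-x t}`, so that `⟪e_x, e_μ⟫ = 1 / (x + μ)` and a combination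
`g = ∑ u_x e_x` corresponds to the rational function `μ ↦ ⟪g, e_μ⟫ = ∑ u_x / (x + μ)`.
By partial fractions there is such a `g = u_a e_a + v`, with `v` in the span of
`{e_b : b ∈ S}`, for which `⟪g, e_μ⟫ = (μ + a)⁻¹ ∏_{b ∈ S} (μ - b) / (μ + b)`.
This vanishes at every `b ∈ S`, so `g` is orthogonal to that span and the distance from
`e_a` to it is `‖g‖ / |u_a|`, where `‖g‖² = u_a ⟪g, e_a⟫ = 1 / (2a)`.
The distance to the closed span of infinitely many exponentials is the limit of the distances
to the spans of finite subfamilies, and the factors of the product are `1 - O(1 / λ_k)`,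
so `∑ 1 / λ_k < ∞` makes the partial products converge to a positive limit.
-/

open MeasureTheory Real Set Metric Filter Topology
open scoped RealInnerProductSpace

lemma memLp_exp_neg_mul {x : ℝ} (hx : 0 < x) :
    MemLp (fun t => exp (-x * t)) 2 (volume.restrict (Ioi (0 : ℝ))) := by
  have hcont : Continuous fun t : ℝ => exp (-x * t) := by fun_prop
  rw [memLp_two_iff_integrable_sq hcont.aestronglyMeasurable]
  have hsq : (fun t : ℝ => exp (-x * t) ^ 2) = fun t => exp (-(2 * x) * t) := by
    ext t; rw [← exp_nat_mul]; ring_nf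
  rw [hsq]
  exact integrableOn_exp_mul_Ioi (by linarith) 0

noncomputable def expL2 (x : ℝ) : Lp ℝ 2 (volume.restrict (Ioi (0 : ℝ))) :=
  if h : 0 < x then (memLp_exp_neg_mul h).toLp _ else 0

lemma coeFn_expL2 {x : ℝ} (hx : 0 < x) :
    (expL2 x : ℝ → ℝ) =ᵐ[volume.restrict (Ioi (0 : ℝ))] fun t => exp (-x * t) := by
  rw [expL2, dif_pos hx]
  exact (memLp_exp_neg_mul hx).coeFn_toLp

lemma inner_expL2 {x y : ℝ} (hx : 0 < x) (hy : 0 < y) :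
    ⟪expL2 x, expL2 y⟫ = 1 / (x + y) := by
  rw [L2.inner_def]
  have hint : ∫ t in Ioi (0 : ℝ), ⟪expL2 x t, expL2 y t⟫
      = ∫ t in Ioi (0 : ℝ), exp (-(x + y) * t) := by
    refine integral_congr_ae ?_
    filter_upwards [coeFn_expL2 hx, coeFn_expL2 hy] with t hxt hyt
    rw [hxt, hyt, Real.inner_apply, ← exp_add]
    ring_nf
  rw [hint, integral_exp_mul_Ioi (by linarith), mul_zero, exp_zero, neg_div_neg_eq]

lemma infDist_eq_norm_sub_of_forall_inner_eq_zero_s5 {E : Type*} [NormedAddCommGroup E]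
    [InnerProductSpace ℝ E] (K : Submodule ℝ E) {x p : E} (hp : p ∈ K)
    (h : ∀ w ∈ K, ⟪x - p, w⟫ = 0) : infDist x K = ‖x - p‖ := by
  rw [(K.norm_eq_iInf_iff_real_inner_eq_zero hp).2 h, infDist_eq_iInf]
  simp only [dist_eq_norm]

lemma tendsto_infDist_span_finset {ι E : Type*} [NormedAddCommGroup E] [NormedSpace ℝ E]
    (f : ι → E) (x : E) :
    Tendsto (fun T : Finset ι => infDist x (Submodule.span ℝ (f '' T) : Set E)) atTop
      (𝓝 (infDist x (Submodule.span ℝ (range f) : Set E))) := by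
  classical
  set d := fun T : Finset ι => infDist x (Submodule.span ℝ (f '' T) : Set E)
  have hanti : Antitone d := fun T T' hTT' => infDist_le_infDist_of_subset
    (Submodule.span_mono (image_mono (Finset.coe_subset.2 hTT'))) ⟨0, Submodule.zero_mem _⟩
  have hbdd : BddBelow (range d) := ⟨0, by rintro _ ⟨T, rfl⟩; exact infDist_nonneg⟩
  convert tendsto_atTop_ciInf hanti hbdd using 2
  refine le_antisymm (le_ciInf fun T => infDist_le_infDist_of_subset
    (Submodule.span_mono (image_subset_range f T)) ⟨0, Submodule.zero_mem _⟩) ?_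
  refine forall_gt_iff_le.mp fun c hc => ?_
  obtain ⟨u, hu, hxu⟩ := (infDist_lt_iff ⟨0, Submodule.zero_mem _⟩).1 hc
  obtain ⟨t, ht, hut⟩ := Submodule.mem_span_finite_of_mem_span hu
  rw [← image_univ, Finset.subset_set_image_iff] at ht
  obtain ⟨T, -, rfl⟩ := ht
  calc ⨅ T, d T ≤ d T := ciInf_le hbdd T
    _ ≤ dist x u := infDist_le_dist_of_mem (by simpa using hut)
    _ < c := hxu

lemma sub_div_add_mul_div_add_eq {x b μ : ℝ} (hxb : x ≠ b) (hx : x + μ ≠ 0)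
    (hb : b + μ ≠ 0) :
    (μ - b) / (μ + b) * (1 / (x + μ))
      = (x + b) / (x - b) / (x + μ) - 2 * b / (x - b) / (b + μ) := by
  have : x - b ≠ 0 := sub_ne_zero.2 hxb
  rw [add_comm μ b]
  field_simp
  ring

lemma exists_sum_div_add_eq_sub_div_add_mul_sum {T : Finset ℝ} {b : ℝ} (u : ℝ → ℝ)
    (hbT : b ∉ T) (hT : ∀ x ∈ T, 0 < x) (hb : 0 < b) :
    ∃ v : ℝ → ℝ, (∀ x ∈ T, v x = u x * ((x + b) / (x - b))) ∧ ∀ μ, 0 < μ →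
      ∑ x ∈ insert b T, v x / (x + μ) = (μ - b) / (μ + b) * ∑ x ∈ T, u x / (x + μ) := by
  refine ⟨Function.update (fun x => u x * ((x + b) / (x - b))) b
    (-∑ y ∈ T, u y * (2 * b / (y - b))), fun x hx => ?_, fun μ hμ => ?_⟩
  · exact Function.update_of_ne (ne_of_mem_of_not_mem hx hbT) _ _
  rw [Finset.sum_insert hbT, Function.update_self, Finset.mul_sum, neg_div, Finset.sum_div,
    ← sub_eq_neg_add, ← Finset.sum_sub_distrib]
  refine Finset.sum_congr rfl fun x hx => ?_
  have hxb : x ≠ b := ne_of_mem_of_not_mem hx hbT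
  rw [Function.update_of_ne hxb, div_eq_mul_one_div (u x), mul_left_comm,
    sub_div_add_mul_div_add_eq hxb (by linarith [hT x hx]) (by linarith)]
  ring

lemma exists_sum_div_add_eq_prod_div_add (a : ℝ) (S : Finset ℝ) (ha : 0 < a)
    (hS : ∀ b ∈ S, 0 < b) (haS : a ∉ S) :
    ∃ u : ℝ → ℝ, u a = ∏ b ∈ S, (a + b) / (a - b) ∧ ∀ μ, 0 < μ →
      ∑ x ∈ insert a S, u x / (x + μ) = (∏ b ∈ S, (μ - b) / (μ + b)) / (μ + a) := by
  induction S using Finset.induction_on with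
  | empty => exact ⟨fun _ => 1, by simp, fun μ _ => by simp [add_comm]⟩
  | @insert b S hbS ih =>
    have hb := hS b (Finset.mem_insert_self b S)
    have hab : a ≠ b := fun h => haS (h ▸ Finset.mem_insert_self b S)
    obtain ⟨u, hua, hu⟩ := ih (fun x hx => hS x (Finset.mem_insert_of_mem hx))
      (fun h => haS (Finset.mem_insert_of_mem h))
    have haSpos : ∀ x ∈ insert a S, 0 < x := by
      simpa [ha] using fun x hx => hS x (Finset.mem_insert_of_mem hx)
    obtain ⟨v, hvu, hv⟩ :=
      exists_sum_div_add_eq_sub_div_add_mul_sum u (by simp [hab.symm, hbS]) haSpos hb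
    refine ⟨v, ?_, fun μ hμ => ?_⟩
    · rw [hvu a (Finset.mem_insert_self a S), hua, Finset.prod_insert hbS]
      ring
    · rw [Finset.insert_comm, hv μ hμ, hu μ hμ, Finset.prod_insert hbS]
      ring

lemma inner_sum_smul_expL2 (T : Finset ℝ) (u : ℝ → ℝ) (hT : ∀ x ∈ T, 0 < x) {μ : ℝ}
    (hμ : 0 < μ) :
    ⟪∑ x ∈ T, u x • expL2 x, expL2 μ⟫ = ∑ x ∈ T, u x / (x + μ) := by
  rw [sum_inner]
  refine Finset.sum_congr rfl fun x hx => ?_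
  rw [real_inner_smul_left, inner_expL2 (hT x hx) hμ, mul_one_div]

lemma infDist_expL2_span_finset (a : ℝ) (S : Finset ℝ) (ha : 0 < a) (hS : ∀ b ∈ S, 0 < b)
    (haS : a ∉ S) :
    infDist (expL2 a)
        (Submodule.span ℝ (expL2 '' S) : Set (Lp ℝ 2 (volume.restrict (Ioi (0 : ℝ)))))
      = (√(2 * a))⁻¹ * ∏ b ∈ S, |b - a| / (b + a) := by
  obtain ⟨u, hua, hu⟩ := exists_sum_div_add_eq_prod_div_add a S ha hS haS
  set K := Submodule.span ℝ (expL2 '' S)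
  set v := ∑ x ∈ S, u x • expL2 x
  set g := ∑ x ∈ insert a S, u x • expL2 x
  have hg_split : g = u a • expL2 a + v := Finset.sum_insert haS
  have hvK : v ∈ K :=
    K.sum_mem fun x hx => K.smul_mem _ (Submodule.subset_span ⟨x, hx, rfl⟩)
  have hg : ∀ μ, 0 < μ → ⟪g, expL2 μ⟫ = (∏ b ∈ S, (μ - b) / (μ + b)) / (μ + a) :=
    fun μ hμ => by rw [inner_sum_smul_expL2 _ u (by simpa [ha] using hS) hμ, hu μ hμ]
  have hgK : ∀ w ∈ K, ⟪g, w⟫ = 0 := by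
    have : K ≤ (ℝ ∙ g)ᗮ := by
      rw [Submodule.span_le]
      rintro _ ⟨b, hb, rfl⟩
      rw [SetLike.mem_coe, Submodule.mem_orthogonal_singleton_iff_inner_right,
        hg b (hS b hb), Finset.prod_eq_zero hb (by simp), zero_div]
    exact fun w hw => Submodule.mem_orthogonal_singleton_iff_inner_right.1 (this hw)
  have hua0 : u a ≠ 0 := by
    rw [hua]
    exact Finset.prod_ne_zero_iff.2 fun b hb => div_ne_zero (by linarith [hS b hb])
      (sub_ne_zero.2 (ne_of_mem_of_not_mem hb haS).symm)
  have hnorm : ‖g‖ = (√(2 * a))⁻¹ := by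
    have hgg : ⟪g, g⟫ = 1 / (2 * a) := by
      nth_rw 2 [hg_split]
      rw [inner_add_right, real_inner_smul_right, hg a ha, hgK v hvK, add_zero, hua,
        ← mul_div_assoc, ← Finset.prod_mul_distrib, Finset.prod_eq_one, two_mul]
      intro b hb
      have : a - b ≠ 0 := sub_ne_zero.2 (ne_of_mem_of_not_mem hb haS).symm
      have : a + b ≠ 0 := by linarith [hS b hb]
      field_simp
    rw [norm_eq_sqrt_real_inner, hgg, one_div, sqrt_inv]
  have hdist : expL2 a - -((u a)⁻¹ • v) = (u a)⁻¹ • g := by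
    rw [hg_split, smul_add, smul_smul, inv_mul_cancel₀ hua0, one_smul, sub_neg_eq_add]
  rw [infDist_eq_norm_sub_of_forall_inner_eq_zero_s5 K (K.neg_mem (K.smul_mem _ hvK)), hdist,
    norm_smul, hnorm, norm_inv, Real.norm_eq_abs, hua, Finset.abs_prod,
    ← Finset.prod_inv_distrib, mul_comm]
  · congr 1
    refine Finset.prod_congr rfl fun b hb => ?_
    rw [abs_div, inv_div, abs_of_pos (by linarith [hS b hb] : 0 < a + b), abs_sub_comm,
      add_comm]
  · intro w hw
    rw [hdist, real_inner_smul_left, hgK w hw, mul_zero]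

lemma abs_abs_sub_div_add_sub_one_le {x a : ℝ} (hx : 0 < x) (ha : 0 < a) :
    |(|x - a| / (x + a) - 1)| ≤ 2 * a * (1 / x) := by
  have hxa : 0 < x + a := by linarith
  have hle : |x - a| / (x + a) ≤ 1 :=
    (div_le_one hxa).2 (abs_sub_le_iff.2 ⟨by linarith, by linarith⟩)
  rw [abs_of_nonpos (by linarith), neg_sub, one_sub_div hxa.ne', div_le_iff₀ hxa]
  calc x + a - |x - a| ≤ 2 * a := by linarith [le_abs_self (x - a)]
    _ ≤ 2 * a * (1 / x) * (x + a) := by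
      rw [mul_assoc, one_div_mul_eq_div, le_mul_iff_one_le_right (by positivity),
        le_div_iff₀ hx]
      linarith

lemma exists_hasProd_abs_sub_div_add {ι : Type*} (l : ι → ℝ) (a : ℝ) (ha : 0 < a)
    (hl : ∀ i, 0 < l i) (hla : ∀ i, l i ≠ a) (hsum : Summable fun i => 1 / l i) :
    ∃ P, 0 < P ∧ HasProd (fun i => |l i - a| / (l i + a)) P := by
  have hpos : ∀ i, 0 < |l i - a| / (l i + a) := fun i =>
    div_pos (abs_pos.2 (sub_ne_zero.2 (hla i))) (by linarith [hl i])
  have hsub : Summable fun i => |l i - a| / (l i + a) - 1 :=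
    (hsum.mul_left (2 * a)).of_norm_bounded fun i => abs_abs_sub_div_add_sub_one_le (hl i) ha
  have hlog := Real.summable_log_one_add_of_summable hsub
  simp only [add_sub_cancel] at hlog
  exact ⟨_, exp_pos _, Real.hasProd_of_hasSum_log hpos hlog.hasSum⟩

theorem infDist_expL2_closure_span_range {ι : Type*} (l : ι → ℝ) (a : ℝ) (ha : 0 < a)
    (hl : ∀ i, 0 < l i) (hinj : Function.Injective l) (hla : ∀ i, l i ≠ a) {P : ℝ}
    (hP : HasProd (fun i => |l i - a| / (l i + a)) P) :
    infDist (expL2 a) (closure (Submodule.span ℝ (range (expL2 ∘ l)) :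
        Set (Lp ℝ 2 (volume.restrict (Ioi (0 : ℝ))))))
      = (√(2 * a))⁻¹ * P := by
  classical
  have hT : ∀ T : Finset ι, infDist (expL2 a) (Submodule.span ℝ ((expL2 ∘ l) '' T) : Set _)
      = (√(2 * a))⁻¹ * ∏ i ∈ T, |l i - a| / (l i + a) := fun T => by
    rw [image_comp, ← Finset.coe_image, infDist_expL2_span_finset a _ ha (by simp [hl])
      (by simpa using fun i _ => hla i), Finset.prod_image hinj.injOn]
  rw [infDist_closure]
  refine tendsto_nhds_unique (tendsto_infDist_span_finset _ _) ?_
  simp only [hT]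
  exact hP.const_mul _

/-- The distance `d_{n,∞}` in `L²(0,∞)` from `e^{-λ_n t}` to the closed span
of the remaining exponentials: the infinite product
`∏_{k≠n} |λ_k - λ_n|/(λ_k + λ_n)` converges to a positive number and the
distance equals `(2λ_n)^{-1/2}` times this product. -/
theorem stmt5 (lam : ℕ+ → ℝ) (hpos : ∀ k : ℕ+, 0 < lam k)
    (hinj : Function.Injective lam)
    (hsum : Summable fun k : ℕ+ => 1 / lam k)
    (F : ℕ+ → Lp ℝ 2 (volume.restrict (Ioi (0 : ℝ))))
    (hF : ∀ k : ℕ+, (F k : ℝ → ℝ) =ᵐ[volume.restrict (Ioi (0 : ℝ))]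
      fun t => Real.exp (-lam k * t)) :
    ∀ n : ℕ+,
      Multipliable (fun k : {k : ℕ+ // k ≠ n} =>
        |lam k - lam n| / (lam k + lam n)) ∧
      0 < (∏' k : {k : ℕ+ // k ≠ n}, |lam k - lam n| / (lam k + lam n)) ∧
      infDist (F n)
          (closure ((Submodule.span ℝ {g | ∃ k : ℕ+, k ≠ n ∧ g = F k} :
            Submodule ℝ (Lp ℝ 2 (volume.restrict (Ioi (0 : ℝ))))) :
            Set (Lp ℝ 2 (volume.restrict (Ioi (0 : ℝ))))))
        = (Real.sqrt (2 * lam n))⁻¹ *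
            ∏' k : {k : ℕ+ // k ≠ n}, |lam k - lam n| / (lam k + lam n) := by
  intro n
  set l : {k : ℕ+ // k ≠ n} → ℝ := fun k => lam k
  have hl : ∀ k, l k ≠ lam n := fun k h => k.2 (hinj h)
  obtain ⟨P, hP, hprod⟩ := exists_hasProd_abs_sub_div_add l (lam n) (hpos n)
    (fun k => hpos k) hl (hsum.comp_injective Subtype.val_injective)
  have hFE : F = expL2 ∘ lam :=
    funext fun k => Lp.ext ((hF k).trans (coeFn_expL2 (hpos k)).symm)
  have hspan : {g | ∃ k : ℕ+, k ≠ n ∧ g = F k} = range (expL2 ∘ l) := by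
    ext g; simp [l, hFE, eq_comm]
  refine ⟨hprod.multipliable, hprod.tprod_eq ▸ hP, ?_⟩
  rw [hspan, hprod.tprod_eq, hFE, Function.comp_apply]
  exact infDist_expL2_closure_span_range l (lam n) (hpos n) (fun k => hpos k)
    (hinj.comp Subtype.val_injective) hl hprod
end

section
/- For every n ∈ ℕ⁺, the infinite product over k ∈ ℕ⁺ with k ≠ n of (k² + n²)/|k² − n²| converges and equals sinh(πn)/(πn). -/
/-!
Write `(k² + n²)/|k² - n²| = (1 + n²/k²) / ((1 + n/k) · |1 - n/k|)`, with the excluded factor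
`k = n` read as `2 / (2 · 1)`. By Euler's sine product at `z = i n`, the numerators multiply to
`sinh (π n) / (π n)`. The denominators telescope: up to `N ≥ n` they multiply to
`C(N + n, n) / C(N, n)`, which tends to `1` since both binomials are asymptotic to `N ^ n / n!`.
As every factor is at least `1`, convergence of the partial products over `1, …, N` gives
convergence of the unordered product.
-/

open Real Filter Finset Topology Asymptotics

theorem Real.tendsto_euler_sinh_prod {x : ℝ} (hx : x ≠ 0) :
    Tendsto (fun N : ℕ => ∏ k ∈ range N, (1 + x ^ 2 / ((k : ℝ) + 1) ^ 2)) atTop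
      (𝓝 (sinh (π * x) / (π * x))) := by
  have h := tendsto_euler_sin_prod' (x := x * Complex.I) (by simpa using hx)
  have hterm : ∀ k : ℕ, 1 + sineTerm (x * Complex.I) k = ((1 + x ^ 2 / ((k : ℝ) + 1) ^ 2 : ℝ) : ℂ) := by
    intro k
    simp only [sineTerm, mul_pow, Complex.I_sq]
    push_cast
    ring
  have hlim : Complex.sin (π * (x * Complex.I)) / (π * (x * Complex.I)) =
      ((sinh (π * x) / (π * x) : ℝ) : ℂ) := by
    rw [← mul_assoc, Complex.sin_mul_I]
    push_cast
    field_simp [Complex.I_ne_zero]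
  simp_rw [hterm, ← Complex.ofReal_prod, hlim] at h
  exact tendsto_ofReal_iff.1 h

theorem hasProd_of_one_le_of_tendsto_prod_range {R : Type*} [CommMonoidWithZero R] [LinearOrder R]
    [ZeroLEOneClass R] [PosMulMono R] [TopologicalSpace R] [OrderTopology R] {f : ℕ → R} {a : R}
    (hf : ∀ k, 1 ≤ f k) (h : Tendsto (fun N => ∏ k ∈ range N, f k) atTop (𝓝 a)) :
    HasProd f a := by
  have hmono := prod_mono_set_of_one_le hf
  refine tendsto_atTop_isLUB hmono ⟨?_, fun b hb => le_of_tendsto' h fun N => hb ⟨_, rfl⟩⟩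
  rintro _ ⟨s, rfl⟩
  obtain ⟨N, hN⟩ := exists_nat_subset_range s
  exact (hmono hN).trans ((hmono.comp fun _ _ => range_subset_range.2).ge_of_tendsto h N)

theorem prod_range_add_div_eq_choose (n N : ℕ) :
    ∏ k ∈ range N, (((k : ℝ) + 1 + n) / ((k : ℝ) + 1)) = (N + n).choose n := by
  induction N with
  | zero => simp
  | succ N ih =>
    have h := Nat.choose_mul_succ_eq (N + n) n
    rw [show N + n + 1 - n = N + 1 by omega, show N + n + 1 = N + 1 + n by omega] at h
    rw [prod_range_succ, ih, mul_div_assoc', div_eq_iff (by positivity)]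
    exact_mod_cast h

theorem prod_range_abs_sub_div_eq_inv_choose {n N : ℕ} (hnN : n ≤ N) :
    ∏ k ∈ range N, (if k + 1 = n then 1 else |(k : ℝ) + 1 - n| / ((k : ℝ) + 1)) =
      ((N.choose n : ℕ) : ℝ)⁻¹ := by
  induction N, hnN using Nat.le_induction with
  | base =>
    obtain _ | m := n
    · simp
    have hterm : ∀ k ∈ range m, (if k + 1 = m + 1 then 1 else
        |(k : ℝ) + 1 - (m + 1 : ℕ)| / ((k : ℝ) + 1)) = (((m - 1 - k : ℕ) : ℝ) + 1) / ((k : ℝ) + 1) := by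
      intro k hk
      rw [mem_range] at hk
      rw [if_neg (by omega), Nat.cast_sub (by omega), Nat.cast_sub (by omega), abs_of_nonpos (by
        push_cast; linarith [(Nat.cast_lt (α := ℝ)).2 hk])]
      push_cast
      ring
    rw [prod_range_succ, if_pos rfl, mul_one, Nat.choose_self, Nat.cast_one, inv_one,
      prod_congr rfl hterm, prod_div_distrib, prod_range_reflect (fun j => (j : ℝ) + 1),
      div_self (prod_ne_zero_iff.2 fun k _ => by positivity)]
  | succ N hnN ih =>
    have hC : ((N.choose n : ℕ) : ℝ) ≠ 0 := by exact_mod_cast (Nat.choose_pos hnN).ne'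
    have hC' : (((N + 1).choose n : ℕ) : ℝ) ≠ 0 := by
      exact_mod_cast (Nat.choose_pos (hnN.trans N.le_succ)).ne'
    have hchoose : ((N.choose n : ℕ) : ℝ) * ((N : ℝ) + 1) =
        (((N + 1).choose n : ℕ) : ℝ) * ((N : ℝ) + 1 - n) := by
      have h := congrArg (Nat.cast (R := ℝ)) (Nat.choose_mul_succ_eq N n)
      push_cast [Nat.cast_sub (by omega : n ≤ N + 1)] at h
      exact h
    rw [prod_range_succ, ih, if_neg (by omega), abs_of_nonneg (by
      linarith [(Nat.cast_le (α := ℝ)).2 hnN])]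
    field_simp
    linarith

theorem tendsto_choose_add_div_choose (n : ℕ) :
    Tendsto (fun N : ℕ => ((N + n).choose n : ℝ) / (N.choose n : ℝ)) atTop (𝓝 1) := by
  have hpow : (fun N : ℕ => ((N + n : ℕ) : ℝ) ^ n / n.factorial) ~[atTop]
      fun N : ℕ => (N : ℝ) ^ n / n.factorial := by
    refine (IsEquivalent.pow ?_ n).div IsEquivalent.refl
    refine IsEquivalent.symm <| (isEquivalent_iff_tendsto_one ?_).2 ?_
    · filter_upwards [eventually_gt_atTop 0] with N hN
      positivity
    · simpa [Pi.div_def] using tendsto_natCast_div_add_atTop (n : ℝ)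
  have h := (((isEquivalent_choose n).comp_tendsto (tendsto_add_atTop_nat n)).trans hpow).trans
    (isEquivalent_choose n).symm
  refine (isEquivalent_iff_tendsto_one ?_).1 h
  filter_upwards [eventually_ge_atTop n] with N hN
  exact_mod_cast (Nat.choose_pos hN).ne'

theorem sq_add_sq_div_abs_sq_sub_sq_eq {k x : ℝ} (hk : 0 < k) (hx : 0 < x) (hkx : k ≠ x) :
    (k ^ 2 + x ^ 2) / |k ^ 2 - x ^ 2| = (1 + x ^ 2 / k ^ 2) / ((k + x) / k * (|k - x| / k)) := by
  have habs : |k ^ 2 - x ^ 2| = (k + x) * |k - x| := by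
    rw [show k ^ 2 - x ^ 2 = (k + x) * (k - x) by ring, abs_mul, abs_of_pos (by positivity)]
  have hne : |k - x| ≠ 0 := abs_ne_zero.2 (sub_ne_zero.2 hkx)
  rw [habs]
  field_simp

theorem one_le_sq_add_sq_div_abs_sq_sub_sq {k x : ℝ} (h : k ^ 2 ≠ x ^ 2) :
    1 ≤ (k ^ 2 + x ^ 2) / |k ^ 2 - x ^ 2| := by
  rw [one_le_div (abs_pos.2 (sub_ne_zero.2 h)), abs_le]
  constructor <;> nlinarith [sq_nonneg k, sq_nonneg x]

theorem hasProd_sq_add_sq_div_abs_sq_sub_sq_nat {n : ℕ} (hn : 0 < n) :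
    HasProd (fun k : ℕ => if k + 1 = n then 1 else
      (((k + 1 : ℕ) : ℝ) ^ 2 + n ^ 2) / |((k + 1 : ℕ) : ℝ) ^ 2 - n ^ 2|) (sinh (π * n) / (π * n)) := by
  have hnR : (0 : ℝ) < n := Nat.cast_pos.2 hn
  have hterm : ∀ k : ℕ, (if k + 1 = n then 1 else
      (((k + 1 : ℕ) : ℝ) ^ 2 + n ^ 2) / |((k + 1 : ℕ) : ℝ) ^ 2 - n ^ 2|) =
      (1 + (n : ℝ) ^ 2 / ((k : ℝ) + 1) ^ 2) / (((k : ℝ) + 1 + n) / ((k : ℝ) + 1) *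
        (if k + 1 = n then 1 else |(k : ℝ) + 1 - n| / ((k : ℝ) + 1))) := by
    intro k
    split_ifs with hk
    · have : (k : ℝ) + 1 = n := by exact_mod_cast hk
      rw [this]
      field_simp
    · push_cast
      exact sq_add_sq_div_abs_sq_sub_sq_eq (by positivity) hnR (by exact_mod_cast hk)
  refine hasProd_of_one_le_of_tendsto_prod_range (fun k => ?_) ?_
  · split_ifs with hk
    · exact le_rfl
    · refine one_le_sq_add_sq_div_abs_sq_sub_sq fun h => hk ?_
      exact_mod_cast (pow_left_inj₀ (by positivity) hnR.le two_ne_zero).1 h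
  · have hratio : Tendsto (fun N : ℕ => (∏ k ∈ range N, (((k : ℝ) + 1 + n) / ((k : ℝ) + 1))) *
        ∏ k ∈ range N, (if k + 1 = n then 1 else |(k : ℝ) + 1 - n| / ((k : ℝ) + 1))) atTop (𝓝 1) := by
      refine (tendsto_choose_add_div_choose n).congr' ?_
      filter_upwards [eventually_ge_atTop n] with N hN
      rw [prod_range_add_div_eq_choose, prod_range_abs_sub_div_eq_inv_choose hN, div_eq_mul_inv]
    have h := (Real.tendsto_euler_sinh_prod hnR.ne').div hratio one_ne_zero
    rw [div_one] at h
    refine h.congr fun N => ?_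
    simp only [Pi.div_apply, hterm, prod_div_distrib, prod_mul_distrib]

theorem hasProd_sq_add_sq_div_abs_sq_sub_sq (n : ℕ+) :
    HasProd (fun k : {k : ℕ+ // k ≠ n} => ((k : ℝ) ^ 2 + (n : ℝ) ^ 2) / |(k : ℝ) ^ 2 - (n : ℝ) ^ 2|)
      (sinh (π * n) / (π * n)) := by
  refine (hasProd_subtype_iff_mulIndicator (s := {k | k ≠ n})
    (f := fun k : ℕ+ => ((k : ℝ) ^ 2 + (n : ℝ) ^ 2) / |(k : ℝ) ^ 2 - (n : ℝ) ^ 2|)).2 ?_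
  have h := (hasProd_pnat_iff_hasProd_succ (f := fun k : ℕ => if k = n then 1 else
    ((k : ℝ) ^ 2 + n ^ 2) / |(k : ℝ) ^ 2 - n ^ 2|)).2 (hasProd_sq_add_sq_div_abs_sq_sub_sq_nat n.pos)
  convert h using 2 with k
  simp [Set.mulIndicator_apply, PNat.coe_inj, ite_not]

/-- `∏_{k≠n} (k² + n²)/|k² - n²| = sinh(πn)/(πn)`. -/
theorem stmt6 (n : ℕ+) :
    Multipliable (fun k : {k : ℕ+ // k ≠ n} =>
      ((k : ℝ) ^ 2 + (n : ℝ) ^ 2) / |(k : ℝ) ^ 2 - (n : ℝ) ^ 2|) ∧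
    (∏' k : {k : ℕ+ // k ≠ n},
        ((k : ℝ) ^ 2 + (n : ℝ) ^ 2) / |(k : ℝ) ^ 2 - (n : ℝ) ^ 2|)
      = Real.sinh (π * n) / (π * n) := by
  have h := hasProd_sq_add_sq_div_abs_sq_sub_sq n
  exact ⟨h.multipliable, h.tprod_eq⟩
end

section
/- For every n ∈ ℕ⁺, the infinite product over k ∈ ℕ⁺ with k ≠ n of |1 − n²/k²| converges and equals 1/2. -/
/-!
For `k ≠ n` we have `|1 - n²/k²| = |k - n| (k + n) / k²`, so the partial product over
`1 ≤ k ≤ n + K`, `k ≠ n`, collapses to `(n+K+1)⋯(2n+K) / (2 (K+1)⋯(K+n))`: the factor `2` is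
the term `(k + n)/k` at the omitted index `k = n`. Numerator and denominator are monic of degree
`n` in `K`, so the partial products tend to `1/2`. The product converges absolutely since
`| |1 - n²/k²| - 1 | ≤ n²/k²`.
-/

open Filter Finset Topology

-- `∏_{k ≠ N} |1 - N²/k²|` over `k : ℕ+` as a product over all of `ℕ`: the index `N`
-- contributes `1`, and so does `0`, since division by zero is zero.
noncomputable def puncturedFactor (N k : ℕ) : ℝ :=
  if k = N then 1 else |1 - (N : ℝ) ^ 2 / (k : ℝ) ^ 2|

lemma puncturedFactor_zero (N : ℕ) : puncturedFactor N 0 = 1 := by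
  by_cases h : 0 = N <;> simp [puncturedFactor, h]

lemma multipliable_puncturedFactor (N : ℕ) : Multipliable (puncturedFactor N) := by
  have hsum : Summable fun k : ℕ => (N : ℝ) ^ 2 * (1 / (k : ℝ) ^ 2) :=
    (Real.summable_one_div_nat_pow.mpr one_lt_two).mul_left _
  have hmul := multipliable_one_add_of_summable (f := fun k => puncturedFactor N k - 1)
    (hsum.of_nonneg_of_le (fun _ => norm_nonneg _) fun k => ?_)
  · simpa using hmul
  unfold puncturedFactor
  split_ifs
  · simp only [sub_self, norm_zero]
    positivity
  · have hrev := abs_abs_sub_abs_le_abs_sub (1 - (N : ℝ) ^ 2 / (k : ℝ) ^ 2) 1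
    rw [abs_one, sub_sub_cancel_left, abs_neg,
      abs_of_nonneg (by positivity : (0 : ℝ) ≤ _ / _)] at hrev
    simpa [div_eq_mul_inv] using hrev

lemma prod_range_abs_one_sub_sq_div_sq {N m : ℕ} (hm : m < N) :
    ∏ k ∈ range m, |1 - (N : ℝ) ^ 2 / ((k + 1 : ℕ) : ℝ) ^ 2|
      = (N - 1).descFactorial m * (N + 1).ascFactorial m / (m.factorial : ℝ) ^ 2 := by
  induction m with
  | zero => simp
  | succ m ih =>
    have hle : 1 - (N : ℝ) ^ 2 / ((m + 1 : ℕ) : ℝ) ^ 2 ≤ 0 := by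
      rw [sub_nonpos, one_le_div (by positivity)]
      gcongr
    rw [prod_range_succ, ih (by omega), abs_of_nonpos hle, Nat.descFactorial_succ,
      Nat.ascFactorial_succ, Nat.factorial_succ]
    push_cast [Nat.sub_sub, Nat.cast_sub (show 1 + m ≤ N by omega)]
    field_simp
    ring

lemma prod_range_puncturedFactor {N : ℕ} (hN : 0 < N) (K : ℕ) :
    ∏ k ∈ range (N + 1 + K), puncturedFactor N k
      = ((N + K + 1).ascFactorial N : ℝ) / (2 * (K + 1).ascFactorial N) := by
  induction K with
  | zero =>
    obtain ⟨p, rfl⟩ : ∃ p, N = p + 1 := ⟨N - 1, by omega⟩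
    have hbelow : ∀ k ∈ range p, puncturedFactor (p + 1) (k + 1)
        = |1 - ((p + 1 : ℕ) : ℝ) ^ 2 / ((k + 1 : ℕ) : ℝ) ^ 2| := fun k hk => by
      rw [puncturedFactor, if_neg (by simp at hk; omega)]
    rw [add_zero, prod_range_succ, prod_range_succ', prod_congr rfl hbelow,
      prod_range_abs_one_sub_sq_div_sq (by omega), puncturedFactor_zero, puncturedFactor,
      if_pos rfl]
    simp only [Nat.add_sub_cancel, Nat.descFactorial_self, zero_add, Nat.one_ascFactorial,
      Nat.ascFactorial_succ]
    push_cast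
    field_simp
    ring
  | succ K ih =>
    have hnum : ((N + K + 1 : ℕ) : ℝ) * (N + K + 1).succ.ascFactorial N
        = ((N + K + 1 + N : ℕ) : ℝ) * (N + K + 1).ascFactorial N := by
      exact_mod_cast Nat.succ_ascFactorial (N + K + 1) N
    have hden : ((K + 1 : ℕ) : ℝ) * (K + 1).succ.ascFactorial N
        = ((K + 1 + N : ℕ) : ℝ) * (K + 1).ascFactorial N := by
      exact_mod_cast Nat.succ_ascFactorial (K + 1) N
    have := (K + 1).ascFactorial_pos N
    have := (K + 1).succ.ascFactorial_pos N
    rw [← add_assoc, prod_range_succ, ih, puncturedFactor, if_neg (by omega), abs_of_nonneg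
      (sub_nonneg.2 (div_le_one_of_le₀ (by gcongr; omega) (by positivity))),
      show N + (K + 1) + 1 = (N + K + 1).succ by omega]
    field_simp
    push_cast at hnum hden ⊢
    -- `(N+K+1)² - N² = (K+1)(2N+K+1)`
    linear_combination ((N + K + 1).ascFactorial N * (2 * N + K + 1) : ℝ) * hden
      - ((K + 1).ascFactorial N * (N + K + 1) : ℝ) * hnum

lemma tendsto_ascFactorial_div_ascFactorial (a b N : ℕ) :
    Tendsto (fun K : ℕ => ((K + a).ascFactorial N : ℝ) / (K + b).ascFactorial N)
      atTop (𝓝 1) := by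
  simp_rw [Nat.ascFactorial_eq_prod_range, Nat.cast_prod, ← prod_div_distrib]
  rw [← prod_const_one (s := range N)]
  refine tendsto_finsetProd _ fun i _ => ?_
  simpa [add_comm, add_left_comm, add_assoc] using
    tendsto_add_mul_div_add_mul_atTop_nhds ((a + i : ℕ) : ℝ) ((b + i : ℕ) : ℝ) 1 one_ne_zero

lemma hasProd_puncturedFactor {N : ℕ} (hN : 0 < N) : HasProd (puncturedFactor N) (1 / 2) := by
  rw [(multipliable_puncturedFactor N).hasProd_iff_tendsto_nat,
    ← tendsto_add_atTop_iff_nat (N + 1)]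
  refine ((tendsto_ascFactorial_div_ascFactorial (N + 1) 1 N).div_const 2).congr fun K => ?_
  rw [add_comm, prod_range_puncturedFactor hN, div_div, mul_comm, add_right_comm, add_comm K]

/-- `∏_{k≠n} |1 - n²/k²| = 1/2`. -/
theorem stmt7 (n : ℕ+) :
    Multipliable (fun k : {k : ℕ+ // k ≠ n} =>
      |1 - (n : ℝ) ^ 2 / (k : ℝ) ^ 2|) ∧
    (∏' k : {k : ℕ+ // k ≠ n}, |1 - (n : ℝ) ^ 2 / (k : ℝ) ^ 2|)
      = 1 / 2 := by
  have hval : Function.Injective fun k : {k : ℕ+ // k ≠ n} => (k : ℕ) :=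
    PNat.coe_injective.comp Subtype.val_injective
  have hprod : HasProd (fun k : {k : ℕ+ // k ≠ n} => |1 - (n : ℝ) ^ 2 / (k : ℝ) ^ 2|) (1 / 2) := by
    refine ((hval.hasProd_iff fun k hk => ?_).mpr (hasProd_puncturedFactor n.pos)).congr_fun
      fun k => ?_
    · rcases Nat.eq_zero_or_pos k with rfl | hpos
      · exact puncturedFactor_zero n
      · have hkn : k = n := by
          by_contra hkn
          exact hk ⟨⟨⟨k, hpos⟩, fun h => hkn (congrArg PNat.val h)⟩, rfl⟩
        simp [puncturedFactor, hkn]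
    · simp [puncturedFactor, PNat.coe_inj, k.2]
  exact ⟨hprod.multipliable, hprod.tprod_eq⟩
end

section
/- Let α > 0. There exists a Borel set Γ_α ⊆ (0,1) of full Lebesgue measure, consisting entirely of irrational numbers, such that for every p ∈ Γ_α there exists a constant C_{α,p} > 0 with |sin(π n p)| ≥ C_{α,p} e^{−α π² n²} for all n ∈ ℕ⁺. -/
/-!
Write `d(x)` for the distance from `x` to the nearest integer. Since `|sin (π x)| ≥ 2 d(x)`, it
suffices that `d(n p) ≥ e^{-απ²n²}` for all large `n`. For `p ∈ (0,1)` the set where `d(n p) < δ`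
is covered by the `n + 1` balls of radius `δ / n` around the points `m / n`, so it has measure at
most `4 δ`; as `∑ e^{-απ²n²} < ∞`, Borel–Cantelli shows that almost every `p` lies in only
finitely many of these sets. For irrational `p` no `sin (π n p)` vanishes, so the finitely many
exceptional `n` only shrink the constant.
-/

open Real MeasureTheory Set Filter

theorem two_mul_abs_sub_round_le_abs_sin_pi_mul (x : ℝ) :
    2 * |x - round x| ≤ |sin (π * x)| := by
  set y := x - round x
  have hy : π * |y| ≤ π / 2 := by nlinarith [abs_sub_round x, pi_pos]
  have hsin : |sin (π * x)| = |sin (π * y)| := by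
    rw [show π * x = π * y + round x * π by ring, sin_add_int_mul_pi, abs_mul,
      abs_neg_one_zpow, one_mul]
  rw [hsin, abs_sin_eq_sin_abs_of_abs_le_pi
    (by rw [abs_mul, abs_of_pos pi_pos]; linarith [pi_pos]), abs_mul, abs_of_pos pi_pos]
  calc 2 * |y| = 2 / π * (π * |y|) := by field_simp
    _ ≤ sin (π * |y|) := mul_le_sin (by positivity) hy

theorem Irrational.sin_pi_mul_ne_zero {x : ℝ} (hx : Irrational x) : sin (π * x) ≠ 0 := by
  rw [Ne, sin_eq_zero_iff]
  rintro ⟨m, hm⟩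
  exact hx.ne_int m (mul_left_cancel₀ pi_ne_zero (by linarith)).symm

theorem exists_mem_ball_of_abs_sub_round_lt {n : ℕ} (hn : 0 < n) {p δ : ℝ} (hp : p ∈ Ioo 0 1)
    (h : |n * p - round (n * p)| < δ) :
    ∃ m ∈ Finset.range (n + 1), p ∈ Metric.ball ((m : ℝ) / n) (δ / n) := by
  have hn' : (0 : ℝ) < n := Nat.cast_pos.mpr hn
  set m := round ((n : ℝ) * p)
  have hm := abs_le.mp (abs_sub_round ((n : ℝ) * p))
  have hm_lo : (-1 : ℝ) < m := by nlinarith [hp.1]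
  have hm_hi : (m : ℝ) < n + 1 := by nlinarith [hp.2]
  have hm_nonneg : 0 ≤ m := by
    have : -1 < m := by exact_mod_cast hm_lo
    omega
  refine ⟨m.toNat, Finset.mem_range.mpr ?_, ?_⟩
  · have : m < n + 1 := by exact_mod_cast hm_hi
    omega
  · rw [Metric.mem_ball, Real.dist_eq,
      show ((m.toNat : ℕ) : ℝ) = m by exact_mod_cast Int.toNat_of_nonneg hm_nonneg,
      show p - m / n = (n * p - m) / n by field_simp, abs_div, abs_of_pos hn']
    exact div_lt_div_of_pos_right h hn'

theorem volume_Ioo_inter_abs_sub_round_lt_le {n : ℕ} (hn : 0 < n) {δ : ℝ} (hδ : 0 ≤ δ) :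
    volume (Ioo 0 1 ∩ {p : ℝ | |n * p - round (n * p)| < δ}) ≤ ENNReal.ofReal (4 * δ) := by
  calc volume (Ioo 0 1 ∩ {p : ℝ | |n * p - round (n * p)| < δ})
      ≤ volume (⋃ m ∈ Finset.range (n + 1), Metric.ball ((m : ℝ) / n) (δ / n)) :=
        measure_mono fun p hp =>
          let ⟨_, hm, hpm⟩ := exists_mem_ball_of_abs_sub_round_lt hn hp.1 hp.2
          mem_iUnion₂_of_mem hm hpm
    _ ≤ ∑ m ∈ Finset.range (n + 1), volume (Metric.ball ((m : ℝ) / n) (δ / n)) :=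
        measure_biUnion_finset_le _ _
    _ = ENNReal.ofReal ((n + 1 : ℕ) * (2 * (δ / n))) := by
        simp only [volume_ball, Finset.sum_const, Finset.card_range, nsmul_eq_mul]
        rw [← ENNReal.ofReal_natCast, ← ENNReal.ofReal_mul (by positivity)]
    _ ≤ ENNReal.ofReal (4 * δ) := by
        refine ENNReal.ofReal_le_ofReal ?_
        have hδn : 2 * δ / n ≤ 2 * δ := div_le_self (by positivity) (by exact_mod_cast hn)
        have hexpand : ((n + 1 : ℕ) : ℝ) * (2 * (δ / n)) = 2 * δ + 2 * δ / n := by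
          field_simp
          push_cast
          ring
        linarith

theorem ae_eventually_le_abs_sub_round {ε : ℕ+ → ℝ} (hε0 : ∀ n, 0 ≤ ε n) (hε : Summable ε) :
    ∀ᵐ p ∂volume.restrict (Ioo (0 : ℝ) 1),
      ∀ᶠ n in cofinite, ε n ≤ |(n : ℝ) * p - round ((n : ℝ) * p)| := by
  have hsum : ∑' n : ℕ+, volume.restrict (Ioo (0 : ℝ) 1)
      {p : ℝ | |n * p - round (n * p)| < ε n} ≠ ⊤ := by
    refine ne_top_of_le_ne_top ?_
      (ENNReal.tsum_le_tsum (g := fun n => ENNReal.ofReal (4 * ε n)) fun n => ?_)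
    · rw [← ENNReal.ofReal_tsum_of_nonneg (fun n => by linarith [hε0 n]) (hε.mul_left 4)]
      exact ENNReal.ofReal_ne_top
    · rw [Measure.restrict_apply' measurableSet_Ioo, inter_comm]
      exact volume_Ioo_inter_abs_sub_round_lt_le n.pos (hε0 n)
  filter_upwards [ae_finite_setOfPred_mem hsum] with p hp
  simpa only [eventually_cofinite, not_le] using hp

theorem exists_pos_mul_le_of_eventually_cofinite {ι : Type*} {f g : ι → ℝ} (hf : ∀ i, 0 < f i)
    (hg : ∀ i, 0 < g i) (h : ∀ᶠ i in cofinite, g i ≤ f i) : ∃ C > 0, ∀ i, C * g i ≤ f i := by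
  classical
  set T : Finset ℝ := insert 1 ((eventually_cofinite.mp h).toFinset.image fun i => f i / g i)
  have hT : T.Nonempty := Finset.insert_nonempty _ _
  refine ⟨T.min' hT, (Finset.lt_min'_iff _ _).mpr ?_, fun i => ?_⟩
  · simp only [T, Finset.mem_insert, Finset.mem_image]
    rintro _ (rfl | ⟨i, -, rfl⟩)
    exacts [one_pos, div_pos (hf i) (hg i)]
  · by_cases hi : g i ≤ f i
    · calc T.min' hT * g i ≤ 1 * g i :=
            mul_le_mul_of_nonneg_right (T.min'_le 1 (Finset.mem_insert_self _ _)) (hg i).le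
        _ ≤ f i := by rwa [one_mul]
    · refine (le_div_iff₀ (hg i)).mp (T.min'_le _ (Finset.mem_insert_of_mem ?_))
      exact Finset.mem_image_of_mem _ (by simpa using hi)

theorem exists_measurableSet_subset_forall_of_ae_restrict {α : Type*} [MeasurableSpace α]
    {μ : Measure α} {s : Set α} {P : α → Prop} (hs : MeasurableSet s)
    (h : ∀ᵐ x ∂μ.restrict s, P x) :
    ∃ t ⊆ s, MeasurableSet t ∧ μ (s \ t) = 0 ∧ ∀ x ∈ t, P x := by
  obtain ⟨u, hu, hu_meas, hP⟩ := h.exists_measurable_mem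
  refine ⟨s ∩ u, inter_subset_left, hs.inter hu_meas, ?_, fun x hx => hP x hx.2⟩
  rw [mem_ae_iff, Measure.restrict_apply hu_meas.compl] at hu
  rwa [sdiff_self_inter, sdiff_eq, inter_comm]

theorem summable_exp_neg_mul_sq {c : ℝ} (hc : 0 < c) :
    Summable fun n : ℕ+ => exp (-c * (n : ℝ) ^ 2) :=
  (summable_exp_nat_mul_of_ge (neg_lt_zero.mpr hc) (f := fun n : ℕ => (n : ℝ) ^ 2)
    fun n => by exact_mod_cast Nat.le_self_pow two_ne_zero n).comp_injective PNat.coe_injective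

/-- For every `α > 0` there is a Borel set `Γ_α ⊆ (0,1)` of full Lebesgue
measure, consisting of irrationals, on which
`|sin(πnp)| ≥ C_{α,p} e^{-απ²n²}` for all `n ∈ ℕ⁺`. -/
theorem stmt13 (α : ℝ) (hα : 0 < α) :
    ∃ Γ : Set ℝ, MeasurableSet Γ ∧ Γ ⊆ Set.Ioo (0 : ℝ) 1 ∧
      volume (Set.Ioo (0 : ℝ) 1 \ Γ) = 0 ∧
      (∀ p ∈ Γ, Irrational p) ∧
      (∀ p ∈ Γ, ∃ C : ℝ, 0 < C ∧
        ∀ n : ℕ+,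
          C * Real.exp (-α * π ^ 2 * (n : ℝ) ^ 2)
            ≤ |Real.sin (π * (n : ℝ) * p)|) := by
  have hε : Summable fun n : ℕ+ => exp (-α * π ^ 2 * (n : ℝ) ^ 2) := by
    simpa only [neg_mul] using summable_exp_neg_mul_sq (by positivity : 0 < α * π ^ 2)
  have hae : ∀ᵐ p ∂volume.restrict (Ioo (0 : ℝ) 1), Irrational p ∧
      ∀ᶠ n : ℕ+ in cofinite,
        exp (-α * π ^ 2 * (n : ℝ) ^ 2) ≤ |(n : ℝ) * p - round ((n : ℝ) * p)| :=
    (ae_restrict_of_ae ((countable_range ((↑) : ℚ → ℝ)).ae_notMem volume)).and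
      (ae_eventually_le_abs_sub_round (fun _ => (exp_pos _).le) hε)
  obtain ⟨Γ, hΓ_sub, hΓ_meas, hΓ_null, hΓ⟩ :=
    exists_measurableSet_subset_forall_of_ae_restrict measurableSet_Ioo hae
  refine ⟨Γ, hΓ_meas, hΓ_sub, hΓ_null, fun p hp => (hΓ p hp).1, fun p hp => ?_⟩
  obtain ⟨hirr, hfar⟩ := hΓ p hp
  simp only [mul_assoc π]
  refine exists_pos_mul_le_of_eventually_cofinite
    (fun n => abs_pos.mpr (hirr.natCast_mul n.ne_zero).sin_pi_mul_ne_zero) (fun _ => exp_pos _) ?_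
  filter_upwards [hfar] with n hn
  linarith [two_mul_abs_sub_round_le_abs_sin_pi_mul ((n : ℝ) * p),
    abs_nonneg ((n : ℝ) * p - round ((n : ℝ) * p))]
end
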